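/- Let E = (E₁, E₂, E₃): ℝ³ → ℝ³ be measurable with finite weak L^{3/2} norm, let ω > 0 and s > 0 be such that ωs is not an integer multiple of 2π, and fix x ∈ ℝ³. Define D(s,·) from E as in the context and consider the map v ↦ D(s, X*(s,x,v)) on ℝ³. Then ‖D(s, X*(s,x,·))‖_{3/2,w} ≤ (√2 / s) (ω²s² / (2(1−cos(ωs))))^{2/3} ‖E‖_{3/2,w}, where ‖E‖²_{3/2,w} := ‖E₁‖²_{3/2,w} + ‖E₂‖²_{3/2,w} + ‖E₃‖²_{3/2,w}. -/

import Mathlib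

open MeasureTheory Real
open scoped ENNReal

/-- The weak `L^q` norm: `sup { |A|^{-1/q'} ∫_A |g| : 0 < |A| < ∞ }`,
where `|A|^{-1/q'} = |A|^{1/q - 1}`. -/
noncomputable def weakNorm {α : Type*} [MeasurableSpace α] (μ : Measure α) (q : ℝ)
    (g : α → ℝ) : ℝ≥0∞ :=
  ⨆ (A : Set α) (_ : MeasurableSet A) (_ : μ A ≠ 0) (_ : μ A ≠ ⊤),
    μ A ^ (1 / q - 1) * ∫⁻ x in A, ENNReal.ofReal |g x| ∂μ

/-- `X*(s,x,v)`, the space component of the inverted magnetized characteristics. -/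
noncomputable def Xstar (ω s : ℝ) (x v : Fin 3 → ℝ) : Fin 3 → ℝ :=
  ![x 0 - v 0 / ω * Real.sin (ω * s) + v 1 / ω * (Real.cos (ω * s) - 1),
    x 1 + v 0 / ω * (1 - Real.cos (ω * s)) - v 1 / ω * Real.sin (ω * s),
    x 2 - v 2 * s]

/-!
`X*(s,x,·)` is the affine map `v ↦ x + M v`, where `M` is the matrix expressing `D(s,·)` through
`E`, and `|det M| = 2 s (1 - cos ωs) / ω²`. A change of variables by `M` multiplies the weak
`L^{3/2}` norm by `|det M|^{-2/3}`, and the weak norm is a seminorm, so the first two components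
of `D(s, X*(s,x,·))` are bounded by `|a| ‖E₁‖ + |b| ‖E₂‖` and `|b| ‖E₁‖ + |a| ‖E₂‖` with
`a = sin(ωs)/ω`, `b = (1 - cos ωs)/ω`, up to that factor. Their squares sum to at most
`2 (a² + b²)(‖E₁‖² + ‖E₂‖²)`, and `a² + b² = 2 (1 - cos ωs)/ω² ≤ s²`.
-/

section WeakNorm

variable {α β : Type*} [MeasurableSpace α] [MeasurableSpace β] {μ : Measure α} {q : ℝ}

theorem le_weakNorm (g : α → ℝ) {A : Set α} (hA : MeasurableSet A) (h0 : μ A ≠ 0)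
    (htop : μ A ≠ ⊤) :
    μ A ^ (1 / q - 1) * ∫⁻ x in A, ENNReal.ofReal |g x| ∂μ ≤ weakNorm μ q g :=
  le_iSup_of_le A <| le_iSup_of_le hA <| le_iSup_of_le h0 <| le_iSup_of_le htop le_rfl

theorem weakNorm_le_add_of_abs_le {f g h : α → ℝ} (hf : AEMeasurable f μ)
    (hfg : ∀ x, |h x| ≤ |f x| + |g x|) :
    weakNorm μ q h ≤ weakNorm μ q f + weakNorm μ q g := by
  refine iSup₂_le fun A hA => iSup₂_le fun h0 htop => ?_
  calc μ A ^ (1 / q - 1) * ∫⁻ x in A, ENNReal.ofReal |h x| ∂μ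
      ≤ μ A ^ (1 / q - 1) * ∫⁻ x in A, (ENNReal.ofReal |f x| + ENNReal.ofReal |g x|) ∂μ := by
        gcongr with x
        exact (ENNReal.ofReal_le_ofReal (hfg x)).trans ENNReal.ofReal_add_le
    _ = μ A ^ (1 / q - 1) * ∫⁻ x in A, ENNReal.ofReal |f x| ∂μ
        + μ A ^ (1 / q - 1) * ∫⁻ x in A, ENNReal.ofReal |g x| ∂μ := by
        rw [lintegral_add_left' (hf.restrict.abs.ennreal_ofReal), mul_add]
    _ ≤ weakNorm μ q f + weakNorm μ q g :=
        add_le_add (le_weakNorm f hA h0 htop) (le_weakNorm g hA h0 htop)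

theorem weakNorm_const_mul (a : ℝ) (g : α → ℝ) :
    weakNorm μ q (fun x => a * g x) = ENNReal.ofReal |a| * weakNorm μ q g := by
  simp only [weakNorm, ENNReal.mul_iSup, abs_mul, ENNReal.ofReal_mul (abs_nonneg a),
    lintegral_const_mul' _ _ ENNReal.ofReal_ne_top, mul_left_comm]

theorem weakNorm_comp_le_of_map_eq_smul {T : α → β} (hT : MeasurableEmbedding T)
    {ν : Measure β} {c : ℝ≥0∞} (hc0 : c ≠ 0) (hctop : c ≠ ⊤) (hmap : μ.map T = c • ν)
    (g : β → ℝ) :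
    weakNorm μ q (fun x => g (T x)) ≤ c ^ (1 / q) * weakNorm ν q g := by
  refine iSup₂_le fun A hA => iSup₂_le fun h0 htop => ?_
  have hpre : T ⁻¹' (T '' A) = A := Set.preimage_image_eq A hT.injective
  have hvol : μ A = c * ν (T '' A) := by
    rw [← smul_eq_mul, ← Measure.smul_apply, ← hmap, hT.map_apply, hpre]
  have hint : ∫⁻ x in A, ENNReal.ofReal |g (T x)| ∂μ
      = c * ∫⁻ y in T '' A, ENNReal.ofReal |g y| ∂ν := by
    rw [← smul_eq_mul, ← lintegral_smul_measure, ← Measure.restrict_smul, ← hmap,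
      hT.restrict_map, hpre, hT.lintegral_map]
  have hB0 : ν (T '' A) ≠ 0 := fun h => h0 (by rw [hvol, h, mul_zero])
  have hBtop : ν (T '' A) ≠ ⊤ := fun h => htop (by rw [hvol, h, ENNReal.mul_top hc0])
  calc μ A ^ (1 / q - 1) * ∫⁻ x in A, ENNReal.ofReal |g (T x)| ∂μ
      = c ^ (1 / q) * (ν (T '' A) ^ (1 / q - 1) * ∫⁻ y in T '' A, ENNReal.ofReal |g y| ∂ν) := by
        rw [hvol, hint, ENNReal.mul_rpow_of_ne_zero hc0 hB0, ENNReal.rpow_sub _ _ hc0 hctop,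
          ENNReal.rpow_one, mul_mul_mul_comm, ENNReal.div_mul_cancel hc0 hctop]
    _ ≤ c ^ (1 / q) * weakNorm ν q g :=
        mul_le_mul_right (le_weakNorm g (hT.measurableSet_image.2 hA) hB0 hBtop) _

end WeakNorm

theorem weakNorm_comp_affine_le {E : Type*} [NormedAddCommGroup E] [NormedSpace ℝ E]
    [MeasurableSpace E] [BorelSpace E] [FiniteDimensional ℝ E] (μ : Measure E)
    [μ.IsAddHaarMeasure] {L : E →ₗ[ℝ] E} (hL : LinearMap.det L ≠ 0) (x₀ : E) (q : ℝ)
    (g : E → ℝ) :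
    weakNorm μ q (fun v => g (x₀ + L v))
      ≤ ENNReal.ofReal |LinearMap.det L|⁻¹ ^ (1 / q) * weakNorm μ q g := by
  have hL' : MeasurableEmbedding L :=
    (L.equivOfDetNeZero hL).toContinuousLinearEquiv.toHomeomorph.measurableEmbedding
  refine weakNorm_comp_le_of_map_eq_smul ((measurableEmbedding_addLeft x₀).comp hL')
    (by simpa using hL) ENNReal.ofReal_ne_top ?_ g
  rw [← Measure.map_map (measurable_const_add x₀) hL'.measurable,
    Measure.map_linearMap_addHaar_eq_smul_addHaar μ hL, Measure.map_smul,
    map_add_left_eq_self, abs_inv]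

/-- The matrix of `D(s,·)` as a linear function of `E`. -/
noncomputable def XstarLinear (ω s : ℝ) : (Fin 3 → ℝ) →ₗ[ℝ] (Fin 3 → ℝ) :=
  Matrix.toLin' !![-(sin (ω * s) / ω), (cos (ω * s) - 1) / ω, 0;
    (1 - cos (ω * s)) / ω, -(sin (ω * s) / ω), 0;
    0, 0, -s]

theorem Xstar_eq_add_XstarLinear (ω s : ℝ) (x : Fin 3 → ℝ) :
    Xstar ω s x = fun v => x + XstarLinear ω s v := by
  ext v i
  fin_cases i <;>
    simp [Xstar, XstarLinear, dotProduct, Fin.sum_univ_three] <;> ring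

theorem det_XstarLinear (ω s : ℝ) :
    LinearMap.det (XstarLinear ω s) = -(s * (2 * (1 - cos (ω * s))) / ω ^ 2) := by
  rw [XstarLinear, LinearMap.det_toLin', Matrix.det_fin_three,
    show 2 * (1 - cos (ω * s)) = sin (ω * s) ^ 2 + (1 - cos (ω * s)) ^ 2 by
      linear_combination -sin_sq_add_cos_sq (ω * s)]
  simp only [Fin.isValue, Matrix.of_apply, Matrix.cons_val', Matrix.cons_val_zero,
    Matrix.cons_val_fin_one, Matrix.cons_val_one, Matrix.cons_val, mul_zero, zero_mul, sub_zero,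
    add_zero]
  ring

theorem measurable_Xstar (ω s : ℝ) (x : Fin 3 → ℝ) : Measurable (Xstar ω s x) := by
  rw [Xstar_eq_add_XstarLinear]
  fun_prop

theorem weakNorm_comp_Xstar_le {ω s : ℝ} (hs : 0 < s) (hcos : cos (ω * s) ≠ 1)
    (x : Fin 3 → ℝ) (g : (Fin 3 → ℝ) → ℝ) :
    weakNorm volume (3 / 2) (fun v => g (Xstar ω s x v))
      ≤ ENNReal.ofReal ((ω ^ 2 * s ^ 2 / (2 * (1 - cos (ω * s)))) ^ ((2 : ℝ) / 3) / s ^ 2)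
        * weakNorm volume (3 / 2) g := by
  have hω : ω ≠ 0 := by rintro rfl; simp at hcos
  have hc : 0 < 1 - cos (ω * s) := sub_pos.2 ((cos_le_one _).lt_of_ne hcos)
  have hdet : |LinearMap.det (XstarLinear ω s)|⁻¹
      = ω ^ 2 * s ^ 2 / (2 * (1 - cos (ω * s))) / s ^ 3 := by
    rw [det_XstarLinear, abs_neg, abs_of_pos (by positivity)]
    field_simp
  have hpow : (s ^ 3) ^ ((2 : ℝ) / 3) = s ^ 2 := by
    rw [← rpow_natCast, ← rpow_mul hs.le, ← rpow_natCast]; norm_num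
  have hdet0 : LinearMap.det (XstarLinear ω s) ≠ 0 := by
    rw [det_XstarLinear]; exact neg_ne_zero.2 (by positivity)
  rw [Xstar_eq_add_XstarLinear]
  convert weakNorm_comp_affine_le volume hdet0 x (3 / 2) g using 2
  rw [hdet, ENNReal.ofReal_rpow_of_nonneg (by positivity) (by norm_num),
    show (1 : ℝ) / (3 / 2) = 2 / 3 by norm_num, div_rpow (by positivity) (pow_nonneg hs.le 3),
    hpow]

theorem sin_div_sq_add_one_sub_cos_div_sq_le (ω s : ℝ) :
    (sin (ω * s) / ω) ^ 2 + ((1 - cos (ω * s)) / ω) ^ 2 ≤ s ^ 2 := by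
  have hsum : sin (ω * s) ^ 2 + (1 - cos (ω * s)) ^ 2 = 2 * (1 - cos (ω * s)) := by
    linear_combination sin_sq_add_cos_sq (ω * s)
  have hcos : 2 * (1 - cos (ω * s)) ≤ (ω * s) ^ 2 := by
    linarith [one_sub_sq_div_two_le_cos (x := ω * s)]
  calc (sin (ω * s) / ω) ^ 2 + ((1 - cos (ω * s)) / ω) ^ 2
      = 2 * (1 - cos (ω * s)) / ω ^ 2 := by rw [div_pow, div_pow, ← add_div, hsum]
    _ ≤ (ω * s) ^ 2 / ω ^ 2 := by gcongr
    _ = s ^ 2 * (ω ^ 2 / ω ^ 2) := by ring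
    _ ≤ s ^ 2 := mul_le_of_le_one_right (sq_nonneg s) (div_self_le_one _)

namespace ENNReal

theorem add_sq_le (a b : ℝ≥0∞) : (a + b) ^ 2 ≤ 2 * (a ^ 2 + b ^ 2) := by
  have h := rpow_add_le_mul_rpow_add_rpow a b one_le_two
  rwa [show (2 : ℝ) - 1 = 1 by norm_num, rpow_one, rpow_two, rpow_two, rpow_two] at h

theorem add_sq_add_add_sq_le (a b x y : ℝ≥0∞) :
    (a * x + b * y) ^ 2 + (b * x + a * y) ^ 2 ≤ 2 * (a ^ 2 + b ^ 2) * (x ^ 2 + y ^ 2) :=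
  calc (a * x + b * y) ^ 2 + (b * x + a * y) ^ 2
      ≤ 2 * ((a * x) ^ 2 + (b * y) ^ 2) + 2 * ((b * x) ^ 2 + (a * y) ^ 2) :=
        add_le_add (add_sq_le _ _) (add_sq_le _ _)
    _ = 2 * (a ^ 2 + b ^ 2) * (x ^ 2 + y ^ 2) := by ring

theorem sqrt_sum_sq_le_of_rotation {a b s k x y z u v w : ℝ≥0∞} (hab : a ^ 2 + b ^ 2 ≤ s ^ 2)
    (hu : u ≤ a * (k * x) + b * (k * y)) (hv : v ≤ b * (k * x) + a * (k * y))
    (hw : w ≤ s * (k * z)) :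
    (u ^ 2 + v ^ 2 + w ^ 2) ^ ((1 : ℝ) / 2)
      ≤ ENNReal.ofReal √2 * s * k * (x ^ 2 + y ^ 2 + z ^ 2) ^ ((1 : ℝ) / 2) := by
  have hsq : u ^ 2 + v ^ 2 + w ^ 2
      ≤ (ENNReal.ofReal √2 * s * k) ^ 2 * (x ^ 2 + y ^ 2 + z ^ 2) :=
    calc u ^ 2 + v ^ 2 + w ^ 2
        ≤ (a * (k * x) + b * (k * y)) ^ 2 + (b * (k * x) + a * (k * y)) ^ 2
          + (s * (k * z)) ^ 2 := by gcongr
      _ = k ^ 2 * ((a * x + b * y) ^ 2 + (b * x + a * y) ^ 2 + s ^ 2 * z ^ 2) := by ring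
      _ ≤ k ^ 2 * (2 * (a ^ 2 + b ^ 2) * (x ^ 2 + y ^ 2) + 2 * (s ^ 2 * z ^ 2)) := by
          gcongr k ^ 2 * (?_ + ?_)
          · exact add_sq_add_add_sq_le a b x y
          · exact le_mul_of_one_le_left zero_le one_le_two
      _ ≤ k ^ 2 * (2 * s ^ 2 * (x ^ 2 + y ^ 2) + 2 * (s ^ 2 * z ^ 2)) := by gcongr
      _ = (ENNReal.ofReal √2 * s * k) ^ 2 * (x ^ 2 + y ^ 2 + z ^ 2) := by
          rw [mul_pow, mul_pow, ← ofReal_pow (sqrt_nonneg 2), sq_sqrt zero_le_two, ofReal_ofNat]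
          ring
  calc (u ^ 2 + v ^ 2 + w ^ 2) ^ ((1 : ℝ) / 2)
      ≤ ((ENNReal.ofReal √2 * s * k) ^ 2 * (x ^ 2 + y ^ 2 + z ^ 2)) ^ ((1 : ℝ) / 2) := by
        gcongr
    _ = ENNReal.ofReal √2 * s * k * (x ^ 2 + y ^ 2 + z ^ 2) ^ ((1 : ℝ) / 2) := by
        rw [mul_rpow_of_nonneg _ _ (by norm_num), one_div, ← Nat.cast_ofNat,
          pow_rpow_inv_natCast two_ne_zero]

end ENNReal

theorem D_comp_Xstar_weakNorm_general (ω s : ℝ) (hs : 0 < s)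
    (hns : ¬ ∃ m : ℤ, ω * s = 2 * π * m)
    (E1 E2 E3 : (Fin 3 → ℝ) → ℝ)
    (hE1 : Measurable E1)
    (x : Fin 3 → ℝ) :
    (weakNorm volume (3 / 2)
        (fun v => -(Real.sin (ω * s) / ω) * E1 (Xstar ω s x v)
          + (Real.cos (ω * s) - 1) / ω * E2 (Xstar ω s x v)) ^ 2
      + weakNorm volume (3 / 2)
          (fun v => (1 - Real.cos (ω * s)) / ω * E1 (Xstar ω s x v)
            - Real.sin (ω * s) / ω * E2 (Xstar ω s x v)) ^ 2
      + weakNorm volume (3 / 2) (fun v => -s * E3 (Xstar ω s x v)) ^ 2) ^ ((1 : ℝ) / 2)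
    ≤ ENNReal.ofReal
        (Real.sqrt 2 / s * (ω ^ 2 * s ^ 2 / (2 * (1 - Real.cos (ω * s)))) ^ ((2 : ℝ) / 3))
      * (weakNorm volume (3 / 2) E1 ^ 2 + weakNorm volume (3 / 2) E2 ^ 2
          + weakNorm volume (3 / 2) E3 ^ 2) ^ ((1 : ℝ) / 2) := by
  have hcos : cos (ω * s) ≠ 1 := fun h => hns <| by
    obtain ⟨m, hm⟩ := (cos_eq_one_iff _).1 h
    exact ⟨m, by rw [← hm]; ring⟩
  set K := ENNReal.ofReal ((ω ^ 2 * s ^ 2 / (2 * (1 - cos (ω * s)))) ^ ((2 : ℝ) / 3) / s ^ 2)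
  have hX : ∀ g, weakNorm volume (3 / 2) (fun v => g (Xstar ω s x v))
      ≤ K * weakNorm volume (3 / 2) g := weakNorm_comp_Xstar_le hs hcos x
  have hE1X : AEMeasurable (fun v => E1 (Xstar ω s x v)) :=
    (hE1.comp (measurable_Xstar ω s x)).aemeasurable
  refine (ENNReal.sqrt_sum_sq_le_of_rotation (a := ENNReal.ofReal |sin (ω * s) / ω|)
    (b := ENNReal.ofReal |(1 - cos (ω * s)) / ω|) (s := ENNReal.ofReal s) (k := K)
    (x := weakNorm volume (3 / 2) E1) (y := weakNorm volume (3 / 2) E2)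
    (z := weakNorm volume (3 / 2) E3) ?_ ?_ ?_ ?_).trans_eq ?_
  · rw [← ENNReal.ofReal_pow (abs_nonneg _), ← ENNReal.ofReal_pow (abs_nonneg _),
      ← ENNReal.ofReal_pow hs.le, ← ENNReal.ofReal_add (by positivity) (by positivity), sq_abs,
      sq_abs]
    exact ENNReal.ofReal_le_ofReal (sin_div_sq_add_one_sub_cos_div_sq_le ω s)
  · grw [weakNorm_le_add_of_abs_le (hE1X.const_mul _) fun v => abs_add_le _ _,
      weakNorm_const_mul, weakNorm_const_mul, abs_neg, ← neg_sub 1 (cos _), neg_div, abs_neg,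
      hX, hX]
  · grw [weakNorm_le_add_of_abs_le (hE1X.const_mul _) fun v => abs_sub _ _,
      weakNorm_const_mul, weakNorm_const_mul, hX, hX]
  · rw [weakNorm_const_mul, abs_neg, abs_of_pos hs]
    grw [hX]
  · rw [← ENNReal.ofReal_mul (sqrt_nonneg 2), ← ENNReal.ofReal_mul (by positivity)]
    congr 1
    field_simp

/-- for the rotated field `D(s,·)` built from `E` and the change of
variables `v ↦ X*(s,x,v)`,
`‖D(s, X*(s,x,·))‖_{3/2,w} ≤ (√2/s)(ω²s²/(2(1−cos ωs)))^{2/3} ‖E‖_{3/2,w}`,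
where the weak norm of a vector field is the square root of the sum of the squared
weak norms of its components. -/
theorem D_comp_Xstar_weakNorm (ω s : ℝ) (hω : 0 < ω) (hs : 0 < s)
    (hns : ¬ ∃ m : ℤ, ω * s = 2 * π * m)
    (E1 E2 E3 : (Fin 3 → ℝ) → ℝ)
    (hE1 : Measurable E1) (hE2 : Measurable E2) (hE3 : Measurable E3)
    (hw1 : weakNorm volume (3 / 2) E1 < ⊤)
    (hw2 : weakNorm volume (3 / 2) E2 < ⊤)
    (hw3 : weakNorm volume (3 / 2) E3 < ⊤)
    (x : Fin 3 → ℝ) :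
    (weakNorm volume (3 / 2)
        (fun v => -(Real.sin (ω * s) / ω) * E1 (Xstar ω s x v)
          + (Real.cos (ω * s) - 1) / ω * E2 (Xstar ω s x v)) ^ 2
      + weakNorm volume (3 / 2)
          (fun v => (1 - Real.cos (ω * s)) / ω * E1 (Xstar ω s x v)
            - Real.sin (ω * s) / ω * E2 (Xstar ω s x v)) ^ 2
      + weakNorm volume (3 / 2) (fun v => -s * E3 (Xstar ω s x v)) ^ 2) ^ ((1 : ℝ) / 2)
    ≤ ENNReal.ofReal
        (Real.sqrt 2 / s * (ω ^ 2 * s ^ 2 / (2 * (1 - Real.cos (ω * s)))) ^ ((2 : ℝ) / 3))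
      * (weakNorm volume (3 / 2) E1 ^ 2 + weakNorm volume (3 / 2) E2 ^ 2
          + weakNorm volume (3 / 2) E3 ^ 2) ^ ((1 : ℝ) / 2) :=
  D_comp_Xstar_weakNorm_general ω s hs hns E1 E2 E3 hE1 x
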